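/- Let d ≥ 1 and let n ∈ (0, 1), ρ^{sR} > 0, ρ^{wR} > 0, g > 0, k > 0, Δt > 0 be constants. Set ρ^w := n ρ^{wR}, ρ^s := (1 − n) ρ^{sR}, and ρ := ρ^s + ρ^w. Let v^*_s, v^*_{wR}, v^{t+1}_s, v^{t+1}_{wR} : ℝ^d → ℝ^d be differentiable vector fields and let Δp : ℝ^d → ℝ be twice continuously differentiable. Assume that at every point: (i) the mixture pressure-correction equation ρ (v^{t+1}_s − v^*_s)/Δt = −∇Δp holds; (ii) the water pressure-correction equation ρ^w (v^{t+1}_s − v^*_s)/Δt + (n² ρ^{wR} g / k) (v^{t+1}_{wR} − v^*_{wR}) = −n ∇Δp holds; (iii) the incompressibility condition div v^{t+1}_s + n · div v^{t+1}_{wR} = 0 holds. Then at every point, ( (k / (ρ^w g)) (ρ^w/ρ − n) − Δt/ρ ) · ∇²Δp = −div v^*_s − n · div v^*_{wR}, where ∇²Δp denotes the Laplacian of Δp (the divergence of its gradient). -/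

import Mathlib

/-! Both pressure-correction equations are linear in the velocity corrections, so they can be
solved pointwise: `v^{t+1}_s = v^*_s - (Δt/ρ) ∇Δp` and `v^{t+1}_{wR} = v^*_{wR} + c ∇Δp` for a
constant `c`. Divergence is linear, so substituting both into the incompressibility condition
leaves `(n c - Δt/ρ) ∇²Δp = -div v^*_s - n div v^*_{wR}`, and `n c` simplifies to
`(k / (ρ^w g)) (ρ^w/ρ - n)`. -/

/-- The divergence of a vector field `v : ℝ^d → ℝ^d` at `x`:
the trace of the Fréchet derivative of `v` at `x`. -/
noncomputable def vdiv {d : ℕ} (v : EuclideanSpace ℝ (Fin d) → EuclideanSpace ℝ (Fin d))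
    (x : EuclideanSpace ℝ (Fin d)) : ℝ :=
  LinearMap.trace ℝ (EuclideanSpace ℝ (Fin d)) (fderiv ℝ v x).toLinearMap

theorem ContDiff.differentiable_gradient {F : Type*} [NormedAddCommGroup F]
    [InnerProductSpace ℝ F] [CompleteSpace F] {f : F → ℝ} (hf : ContDiff ℝ 2 f) :
    Differentiable ℝ (gradient f) :=
  (InnerProductSpace.toDual ℝ F).symm.toContinuousLinearEquiv.differentiable.comp
    ((hf.fderiv_right (m := 1) (by norm_num)).differentiable one_ne_zero)

theorem vdiv_add_smul {d : ℕ} {v w : EuclideanSpace ℝ (Fin d) → EuclideanSpace ℝ (Fin d)}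
    {x : EuclideanSpace ℝ (Fin d)} (hv : DifferentiableAt ℝ v x) (hw : DifferentiableAt ℝ w x)
    (c : ℝ) : vdiv (fun y => v y + c • w y) x = vdiv v x + c * vdiv w x := by
  rw [vdiv, fderiv_fun_add hv (hw.fun_const_smul c), fderiv_fun_const_smul hw]
  simp only [ContinuousLinearMap.toLinearMap_add, ContinuousLinearMap.toLinearMap_smul, map_add,
    map_smul, smul_eq_mul, vdiv]

theorem velocity_corrections_of_pressure_corrections {E : Type*} [AddCommGroup E] [Module ℝ E]
    {ρ ρw Δt β n : ℝ} (hρ : ρ ≠ 0) (hΔt : Δt ≠ 0) (hβ : β ≠ 0) {δs δw G : E}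
    (hmix : (ρ / Δt) • δs = -G) (hwater : (ρw / Δt) • δs + β • δw = -(n • G)) :
    δs = (-(Δt / ρ)) • G ∧ δw = (β⁻¹ * (ρw / ρ - n)) • G := by
  have hs : δs = (-(Δt / ρ)) • G := by
    rw [(eq_inv_smul_iff₀ (div_ne_zero hρ hΔt)).mpr hmix, inv_div, neg_smul, smul_neg]
  refine ⟨hs, (eq_inv_smul_iff₀ hβ).mpr ?_ |>.trans (smul_smul _ _ _)⟩
  have hcancel : ρw / Δt * -(Δt / ρ) = -(ρw / ρ) := by field_simp
  rw [hs, smul_smul, hcancel] at hwater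
  linear_combination (norm := module) hwater

theorem pressure_poisson_equation_general {d : ℕ}
    (n ρsR ρwR g k Δt : ℝ)
    (hn : n ∈ Set.Ioo (0 : ℝ) 1) (hρsR : 0 < ρsR) (hρwR : 0 < ρwR)
    (hg : 0 < g) (hk : 0 < k) (hΔt : 0 < Δt)
    (ρw ρs ρ : ℝ) (hρw : ρw = n * ρwR) (hρs : ρs = (1 - n) * ρsR)
    (hρ : ρ = ρs + ρw)
    (vss vswR vt1s vt1wR : EuclideanSpace ℝ (Fin d) → EuclideanSpace ℝ (Fin d))
    (hvss : Differentiable ℝ vss) (hvswR : Differentiable ℝ vswR)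
    (Δp : EuclideanSpace ℝ (Fin d) → ℝ) (hΔp : ContDiff ℝ 2 Δp)
    (hmix : ∀ x, (ρ / Δt) • (vt1s x - vss x) = -gradient Δp x)
    (hwater : ∀ x, (ρw / Δt) • (vt1s x - vss x)
        + (n ^ 2 * ρwR * g / k) • (vt1wR x - vswR x) = -(n • gradient Δp x))
    (hincomp : ∀ x, vdiv vt1s x + n * vdiv vt1wR x = 0) :
    ∀ x, (k / (ρw * g) * (ρw / ρ - n) - Δt / ρ) * vdiv (fun y => gradient Δp y) x
      = -vdiv vss x - n * vdiv vswR x := by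
  intro x
  obtain ⟨hn0, hn1⟩ := hn
  have hρpos : 0 < ρ := by
    rw [hρ, hρs, hρw]
    exact add_pos (mul_pos (sub_pos.mpr hn1) hρsR) (mul_pos hn0 hρwR)
  have hβ : n ^ 2 * ρwR * g / k ≠ 0 := by positivity
  have hcorr (y : EuclideanSpace ℝ (Fin d)) :=
    velocity_corrections_of_pressure_corrections hρpos.ne' hΔt.ne' hβ (hmix y) (hwater y)
  have hsolid : vt1s = fun y => vss y + (-(Δt / ρ)) • gradient Δp y :=
    funext fun y => sub_eq_iff_eq_add'.mp (hcorr y).1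
  have hseepage :
      vt1wR = fun y => vswR y + ((n ^ 2 * ρwR * g / k)⁻¹ * (ρw / ρ - n)) • gradient Δp y :=
    funext fun y => sub_eq_iff_eq_add'.mp (hcorr y).2
  have hG := hΔp.differentiable_gradient x
  have key := hincomp x
  rw [hsolid, hseepage, vdiv_add_smul (hvss x) hG, vdiv_add_smul (hvswR x) hG] at key
  have hcoef : k / (ρw * g) * (ρw / ρ - n) - Δt / ρ
      = -(Δt / ρ) + n * ((n ^ 2 * ρwR * g / k)⁻¹ * (ρw / ρ - n)) := by
    subst hρw; field_simp; ring
  rw [hcoef]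
  linear_combination key

/-- The pressure Poisson equation of the semi-implicit two-phase MPM:
from the mixture pressure-correction equation, the water pressure-correction
equation, and incompressibility of the final velocities, it follows that
`( (k/(ρ^w g))(ρ^w/ρ − n) − Δt/ρ ) ∇²Δp = −∇·v*_s − n ∇·v*_{wR}` everywhere,
where `∇²Δp = ∇·(∇Δp)` is the Laplacian of the pressure increment. -/
theorem pressure_poisson_equation {d : ℕ} (hd : 1 ≤ d)
    (n ρsR ρwR g k Δt : ℝ)
    (hn : n ∈ Set.Ioo (0 : ℝ) 1) (hρsR : 0 < ρsR) (hρwR : 0 < ρwR)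
    (hg : 0 < g) (hk : 0 < k) (hΔt : 0 < Δt)
    (ρw ρs ρ : ℝ) (hρw : ρw = n * ρwR) (hρs : ρs = (1 - n) * ρsR)
    (hρ : ρ = ρs + ρw)
    (vss vswR vt1s vt1wR : EuclideanSpace ℝ (Fin d) → EuclideanSpace ℝ (Fin d))
    (hvss : Differentiable ℝ vss) (hvswR : Differentiable ℝ vswR)
    (hvt1s : Differentiable ℝ vt1s) (hvt1wR : Differentiable ℝ vt1wR)
    (Δp : EuclideanSpace ℝ (Fin d) → ℝ) (hΔp : ContDiff ℝ 2 Δp)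
    (hmix : ∀ x, (ρ / Δt) • (vt1s x - vss x) = -gradient Δp x)
    (hwater : ∀ x, (ρw / Δt) • (vt1s x - vss x)
        + (n ^ 2 * ρwR * g / k) • (vt1wR x - vswR x) = -(n • gradient Δp x))
    (hincomp : ∀ x, vdiv vt1s x + n * vdiv vt1wR x = 0) :
    ∀ x, (k / (ρw * g) * (ρw / ρ - n) - Δt / ρ) * vdiv (fun y => gradient Δp y) x
      = -vdiv vss x - n * vdiv vswR x :=
  pressure_poisson_equation_general n ρsR ρwR g k Δt hn hρsR hρwR hg hk hΔt ρw ρs ρ hρw hρs hρ vss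
    vswR vt1s vt1wR hvss hvswR Δp hΔp hmix hwater hincomp
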